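/- arXiv:1412.3089 — 6 statements merged into one kernel-verified Lean document; each statement's English description precedes it below -/
import Mathlib

section
/- For all positive integers x and y, if x divides y, then S_r(x) divides S_r(y), where S_r is the r-th Schemmel totient function. -/
/-! If some prime `p ≤ r` divides `y`, then `S_r(y) = 0` and there is nothing to prove. Otherwise
every prime factor of `x` is a prime factor of `y` exceeding `r`, and the local factor
`p^(a-1) (p - r)` of `S_r(x)` divides the local factor `p^(b-1) (p - r)` of `S_r(y)` since `a ≤ b`. -/

/-- The `r`-th Schemmel totient function: multiplicative, with
`S_r(p^a) = 0` if `p ≤ r` and `S_r(p^a) = p^(a-1) * (p - r)` if `p > r`. -/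
def schemmel (r n : ℕ) : ℕ :=
  n.factorization.prod (fun p a => if p ≤ r then 0 else p ^ (a - 1) * (p - r))

lemma schemmel_eq_zero_of_mem_primeFactors {r n p : ℕ} (hp : p ∈ n.primeFactors) (hpr : p ≤ r) :
    schemmel r n = 0 :=
  Finset.prod_eq_zero hp (if_pos hpr)

theorem schemmel_dvd_of_dvd_general (r x y : ℕ) (hy : 0 < y)
    (h : x ∣ y) : schemmel r x ∣ schemmel r y := by
  by_cases hsmall : ∃ p ∈ y.primeFactors, p ≤ r
  · obtain ⟨p, hp, hpr⟩ := hsmall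
    rw [schemmel_eq_zero_of_mem_primeFactors hp hpr]
    exact dvd_zero _
  push Not at hsmall
  have hsub : x.primeFactors ⊆ y.primeFactors := Nat.primeFactors_mono h hy.ne'
  have hle : x.factorization ≤ y.factorization :=
    (Nat.factorization_le_iff_dvd (ne_zero_of_dvd_ne_zero hy.ne' h) hy.ne').2 h
  refine Finsupp.prod_dvd_prod_of_subset_of_dvd hsub fun p hp => ?_
  rw [if_neg (hsmall p (hsub hp)).not_ge, if_neg (hsmall p (hsub hp)).not_ge]
  exact mul_dvd_mul_right (pow_dvd_pow p (Nat.sub_le_sub_right (hle p) 1)) _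

theorem schemmel_dvd_of_dvd (r x y : ℕ) (hr : 0 < r) (hx : 0 < x) (hy : 0 < y)
    (h : x ∣ y) : schemmel r x ∣ schemmel r y :=
  schemmel_dvd_of_dvd_general r x y hy h
end

section
/- Let r, α be nonnegative integers and p a prime such that r + 1 is prime. Then (r+1)^α · p is a Schemmel nontotient number of order r if and only if for every nonnegative integer t ≤ α, p ≠ (r+1)^t + r and (r+1)^t · p + r is not prime. -/
section Schemmel

variable {r : ℕ}

theorem schemmel_prime_pow {q a : ℕ} (hq : q.Prime) (ha : a ≠ 0) :
    schemmel r (q ^ a) = if q ≤ r then 0 else q ^ (a - 1) * (q - r) := by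
  rw [schemmel, hq.factorization_pow, Finsupp.prod, Finsupp.support_single _ ha]
  simp

theorem schemmel_mul {m n : ℕ} (h : m.Coprime n) :
    schemmel r (m * n) = schemmel r m * schemmel r n := by
  rw [schemmel, Nat.factorization_mul_of_coprime h, Finsupp.prod_add_index_of_disjoint]
  · rfl
  · simpa using h.disjoint_primeFactors

theorem schemmel_eq_prod_primeFactors (x : ℕ) :
    schemmel r x = ∏ q ∈ x.primeFactors, schemmel r (q ^ x.factorization q) := by
  rw [schemmel, Finsupp.prod, Nat.support_factorization]
  refine Finset.prod_congr rfl fun q hq => ?_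
  rw [schemmel_prime_pow (Nat.prime_of_mem_primeFactors hq)
    (Finsupp.mem_support_iff.mp (by rwa [Nat.support_factorization]))]

theorem schemmel_prime_pow_succ_of_lt {q : ℕ} (hq : q.Prime) (hrq : r < q) (a : ℕ) :
    schemmel r (q ^ (a + 1)) = q ^ a * (q - r) := by
  rw [schemmel_prime_pow hq a.add_one_ne_zero, if_neg hrq.not_ge, Nat.add_sub_cancel]

theorem schemmel_succ_pow_succ (hr : (r + 1).Prime) (k : ℕ) :
    schemmel r ((r + 1) ^ (k + 1)) = (r + 1) ^ k := by
  rw [schemmel_prime_pow_succ_of_lt hr r.lt_succ_self, Nat.add_sub_cancel_left, mul_one]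

theorem schemmel_succ_pow_succ_mul_prime_pow_succ (hr : (r + 1).Prime) {q : ℕ} (hq : q.Prime)
    (hrq : r + 1 < q) (k a : ℕ) :
    schemmel r ((r + 1) ^ (k + 1) * q ^ (a + 1)) = (r + 1) ^ k * (q ^ a * (q - r)) := by
  have hcop : ((r + 1) ^ (k + 1)).Coprime (q ^ (a + 1)) :=
    Nat.Coprime.pow _ _ ((Nat.coprime_primes hr hq).mpr hrq.ne)
  rw [schemmel_mul hcop, schemmel_succ_pow_succ hr, schemmel_prime_pow_succ_of_lt hq (by omega)]

theorem exists_prime_dvd_of_prime_dvd_schemmel {p x : ℕ} (hp : p.Prime)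
    (hpx : p ∣ schemmel r x) (hx : schemmel r x ≠ 0) :
    ∃ q a, q.Prime ∧ r < q ∧ p ∣ q ^ a * (q - r) ∧ q ^ a * (q - r) ∣ schemmel r x := by
  rw [schemmel_eq_prod_primeFactors] at hpx
  obtain ⟨q, hqx, hpq⟩ := hp.prime.exists_mem_finset_dvd hpx
  have hdvd : schemmel r (q ^ x.factorization q) ∣ schemmel r x := by
    rw [schemmel_eq_prod_primeFactors x]
    exact Finset.dvd_prod_of_mem _ hqx
  have hq := Nat.prime_of_mem_primeFactors hqx
  have ha : x.factorization q ≠ 0 := by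
    rw [← Finsupp.mem_support_iff, Nat.support_factorization]
    exact hqx
  rw [schemmel_prime_pow hq ha] at hpq hdvd
  split_ifs at hpq hdvd with hqr
  · exact absurd (zero_dvd_iff.mp hdvd) hx
  · exact ⟨q, _, hq, not_le.mp hqr, hpq, hdvd⟩

end Schemmel

theorem exists_eq_pow_or_eq_pow_mul_of_dvd_pow_mul {ℓ p d α : ℕ} (hℓ : ℓ.Prime) (hp : p.Prime)
    (h : d ∣ ℓ ^ α * p) : ∃ t ≤ α, d = ℓ ^ t ∨ d = ℓ ^ t * p := by
  obtain ⟨d₁, d₂, h₁, h₂, rfl⟩ := Nat.dvd_mul.mp h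
  obtain ⟨t, ht, rfl⟩ := (Nat.dvd_prime_pow hℓ).mp h₁
  rcases (Nat.dvd_prime hp).mp h₂ with rfl | rfl
  · exact ⟨t, ht, Or.inl (mul_one _)⟩
  · exact ⟨t, ht, Or.inr rfl⟩

section PrimePowMulPrime

variable {r α p t : ℕ}

theorem exists_schemmel_eq_of_eq_pow_add (hr : (r + 1).Prime) (hp : p.Prime) (ht : t ≤ α)
    (h : p = (r + 1) ^ t + r) : ∃ x, 0 < x ∧ schemmel r x = (r + 1) ^ α * p := by
  rcases t with _ | s
  · refine ⟨(r + 1) ^ (α + 1 + 1), by positivity, ?_⟩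
    rw [schemmel_succ_pow_succ hr, pow_succ, h, pow_zero, add_comm]
  · have hrp : r + 1 < p := by
      have := Nat.one_lt_pow s.add_one_ne_zero hr.one_lt
      omega
    refine ⟨(r + 1) ^ (α - (s + 1) + 1) * p ^ (1 + 1), Nat.mul_pos (by positivity)
      (pow_pos hp.pos _), ?_⟩
    rw [schemmel_succ_pow_succ_mul_prime_pow_succ hr hp hrp, show p - r = (r + 1) ^ (s + 1) by
      omega, pow_one, mul_comm p, ← mul_assoc, pow_sub_mul_pow _ ht]

theorem exists_schemmel_eq_of_prime_pow_mul_add (hr : (r + 1).Prime) (hp : p.Prime)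
    (ht : t ≤ α) (hq : ((r + 1) ^ t * p + r).Prime) :
    ∃ x, 0 < x ∧ schemmel r x = (r + 1) ^ α * p := by
  have hrq : r + 1 < (r + 1) ^ t * p + r :=
    have := Nat.mul_le_mul (Nat.one_le_pow t (r + 1) r.succ_pos) hp.two_le
    by omega
  refine ⟨(r + 1) ^ (α - t + 1) * ((r + 1) ^ t * p + r) ^ (0 + 1),
    Nat.mul_pos (by positivity) (pow_pos hq.pos _), ?_⟩
  rw [schemmel_succ_pow_succ_mul_prime_pow_succ hr hq hrq, pow_zero, one_mul,
    Nat.add_sub_cancel, ← mul_assoc, pow_sub_mul_pow _ ht]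

theorem exists_eq_pow_add_or_prime_of_schemmel_eq (hr : (r + 1).Prime) (hp : p.Prime) {x : ℕ}
    (hx : schemmel r x = (r + 1) ^ α * p) :
    ∃ t ≤ α, p = (r + 1) ^ t + r ∨ ((r + 1) ^ t * p + r).Prime := by
  by_cases hpr : p = r + 1
  · exact ⟨0, α.zero_le, Or.inl (by rw [pow_zero]; omega)⟩
  obtain ⟨q, a, hq, hrq, hpq, hqx⟩ := exists_prime_dvd_of_prime_dvd_schemmel hp
    (hx ▸ dvd_mul_left p _) (hx ▸ mul_ne_zero (pow_ne_zero _ r.succ_ne_zero) hp.ne_zero)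
  have hdvd : q - r ∣ (r + 1) ^ α * p := hx ▸ (dvd_mul_left _ _).trans hqx
  obtain ⟨t, ht, he | he⟩ := exists_eq_pow_or_eq_pow_mul_of_dvd_pow_mul hr hp hdvd
  · refine ⟨t, ht, Or.inl ?_⟩
    rw [he] at hpq
    have hpq' : p ∣ q ^ a := (hp.prime.dvd_or_dvd hpq).resolve_right fun h =>
      hpr ((Nat.prime_dvd_prime_iff_eq hp hr).mp (hp.dvd_of_dvd_pow h))
    have := (Nat.prime_dvd_prime_iff_eq hp hq).mp (hp.dvd_of_dvd_pow hpq')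
    omega
  · exact ⟨t, ht, Or.inr (by rwa [show (r + 1) ^ t * p + r = q by omega])⟩

end PrimePowMulPrime

theorem prime_pow_mul_nontotient_iff (r α p : ℕ) (hr : (r + 1).Prime) (hp : p.Prime) :
    (¬ ∃ x : ℕ, 0 < x ∧ schemmel r x = (r + 1) ^ α * p) ↔
      ∀ t : ℕ, t ≤ α → p ≠ (r + 1) ^ t + r ∧ ¬ ((r + 1) ^ t * p + r).Prime := by
  constructor
  · intro hne t ht
    exact ⟨fun h => hne (exists_schemmel_eq_of_eq_pow_add hr hp ht h),
      fun h => hne (exists_schemmel_eq_of_prime_pow_mul_add hr hp ht h)⟩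
  · rintro hall ⟨x, -, hx⟩
    obtain ⟨t, ht, h | h⟩ := exists_eq_pow_add_or_prime_of_schemmel_eq hr hp hx
    exacts [(hall t ht).1 h, (hall t ht).2 h]
end

section
/- Let r be an odd positive integer not divisible by any of 3, 5, 17, 257, 641, 65537, 6700417. Then there exist infinitely many primes p such that for every nonnegative integer α, 2^α · p is a Schemmel nontotient number of order r. -/
/-!
If `S_r(x) = 2^α p` with `p` prime, then `p` divides the factor `q^(a-1) (q - r)` of some prime
power `q^a ∥ x`, and this factor divides `2^α p`. So either `q = 2^c p + r` is prime, or `q = p`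
and `p = 2^b + r`. The second case is ruled out by `p ≡ r + 6 (mod 8)`. The first is ruled out
by a covering system: the prime factors `3, 5, 17, 257, 65537, 641, 6700417` of `2^64 - 1` have
orders of `2` dividing `2, 4, 8, 16, 32, 64, 64`, the classes `c ≡ 1 (2), 2 (4), 4 (8), 8 (16),
16 (32), 32 (64), 0 (64)` cover every `c`, and a congruence condition on `p` modulo each of these
primes makes it divide `2^c p + r` on its class. As `r` is odd and prime to these moduli, all the
conditions on `p` are unit residue classes, and Dirichlet's theorem gives infinitely many `p`.
-/

open Filter Function

theorem eq_two_pow_mul_or_of_dvd {p q k n α : ℕ} (hp : p.Prime) (hq : q.Prime)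
    (hpd : p ∣ q ^ k * n) (hd : q ^ k * n ∣ 2 ^ α * p) :
    (∃ c, n = 2 ^ c * p) ∨ (q = p ∧ ∃ b, n = 2 ^ b) := by
  rcases (Nat.Prime.dvd_mul hp).mp hpd with hpq | ⟨t, rfl⟩
  · obtain rfl : q = p :=
      ((Nat.prime_dvd_prime_iff_eq hp hq).mp (hp.dvd_of_dvd_pow hpq)).symm
    have hk : k ≠ 0 := by
      rintro rfl
      exact hp.one_lt.ne' (Nat.dvd_one.mp hpq)
    have : q * n ∣ q * 2 ^ α := by
      rw [mul_comm q (2 ^ α)]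
      exact (mul_dvd_mul_right (dvd_pow_self q hk) n).trans hd
    obtain ⟨b, -, hb⟩ :=
      (Nat.dvd_prime_pow Nat.prime_two).mp (Nat.dvd_of_mul_dvd_mul_left hp.pos this)
    exact .inr ⟨rfl, b, hb⟩
  · have : p * t ∣ p * 2 ^ α := by
      rw [mul_comm p (2 ^ α)]
      exact (Dvd.intro_left _ rfl).trans hd
    obtain ⟨c, -, hc⟩ :=
      (Nat.dvd_prime_pow Nat.prime_two).mp (Nat.dvd_of_mul_dvd_mul_left hp.pos this)
    exact .inl ⟨c, by rw [hc, mul_comm]⟩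

theorem schemmel_eq_two_pow_mul_prime {r x α p : ℕ} (hp : p.Prime)
    (h : schemmel r x = 2 ^ α * p) :
    (∃ c, (2 ^ c * p + r).Prime) ∨ ∃ b, p = 2 ^ b + r := by
  have hprod : ∏ q ∈ x.primeFactors,
      (if q ≤ r then 0 else q ^ (x.factorization q - 1) * (q - r)) = 2 ^ α * p := h
  obtain ⟨q, hqx, hpq⟩ :=
    (Prime.dvd_finsetProd_iff hp.prime _).mp (hprod ▸ dvd_mul_left p _)
  have hqd := hprod ▸ Finset.dvd_prod_of_mem _ hqx
  have hq := Nat.prime_of_mem_primeFactors hqx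
  split_ifs at hpq hqd with hqr
  · exact absurd (zero_dvd_iff.mp hqd) (mul_ne_zero (by positivity) hp.ne_zero)
  rcases eq_two_pow_mul_or_of_dvd hp hq hpq hqd with ⟨c, hc⟩ | ⟨rfl, b, hb⟩
  · exact .inl ⟨c, by rwa [← hc, Nat.sub_add_cancel (by omega)]⟩
  · exact .inr ⟨b, by omega⟩

theorem two_pow_add_not_modEq (b r : ℕ) : ¬ 2 ^ b + r ≡ r + 6 [MOD 8] := by
  have h2b : 2 ^ b % 8 ≠ 6 := by
    rcases lt_or_ge b 3 with hb | hb
    · interval_cases b <;> decide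
    · have h8 : 2 ^ 3 ∣ 2 ^ b := pow_dvd_pow 2 hb
      omega
  unfold Nat.ModEq
  omega

/-- The class `c ≡ residue (mod period)` of exponents, on which `modulus` is to divide
`2 ^ c * p + r`. -/
structure CoveringClass where
  modulus : ℕ
  period : ℕ
  residue : ℕ

def IsCovering (L : List CoveringClass) : Prop :=
  (∀ c, ∃ t ∈ L, c % t.period = t.residue) ∧ ∀ t ∈ L, 2 ^ t.period ≡ 1 [MOD t.modulus]

theorem dvd_two_pow_mul_add_of_dvd_of_mod_eq {m e c c₀ p r : ℕ} (he : 2 ^ e ≡ 1 [MOD m])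
    (hc : c % e = c₀) (h : m ∣ 2 ^ c₀ * p + r) : m ∣ 2 ^ c * p + r := by
  have h2c : 2 ^ c ≡ 2 ^ c₀ [MOD m] := calc
    2 ^ c = (2 ^ e) ^ (c / e) * 2 ^ (c % e) := by rw [← pow_mul, ← pow_add, Nat.div_add_mod]
    _ ≡ 1 ^ (c / e) * 2 ^ c₀ [MOD m] := by rw [hc]; exact (he.pow _).mul_right _
    _ = 2 ^ c₀ := by rw [one_pow, one_mul]
  exact (((h2c.mul_right p).add_right r).dvd_iff dvd_rfl).mpr h

theorem IsCovering.not_prime {L : List CoveringClass} (hL : IsCovering L) {p r : ℕ}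
    (hm : ∀ t ∈ L, 1 < t.modulus ∧ t.modulus < p)
    (hdvd : ∀ t ∈ L, t.modulus ∣ 2 ^ t.residue * p + r) (c : ℕ) :
    ¬ (2 ^ c * p + r).Prime := by
  intro hprime
  obtain ⟨t, ht, hc⟩ := hL.1 c
  have hlt : t.modulus < 2 ^ c * p + r :=
    (hm t ht).2.trans_le ((Nat.le_mul_of_pos_left p (by positivity)).trans (Nat.le_add_right _ r))
  rcases hprime.eq_one_or_self_of_dvd _
      (dvd_two_pow_mul_add_of_dvd_of_mod_eq (hL.2 t ht) hc (hdvd t ht)) with h | h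
  · exact (hm t ht).1.ne' h
  · exact hlt.ne h

/-- `2 ^ (period - residue)` inverts `2 ^ residue` modulo `modulus`, so for `p` in this class
`2 ^ residue * p ≡ -r`. -/
def CoveringClass.primeResidue (t : CoveringClass) (r : ℕ) : ℕ :=
  2 ^ (t.period - t.residue) * ((t.modulus - 1) * r)

theorem CoveringClass.dvd_of_modEq_primeResidue (t : CoveringClass) {p r : ℕ}
    (hm : 1 ≤ t.modulus) (he : 2 ^ t.period ≡ 1 [MOD t.modulus]) (hc : t.residue ≤ t.period)
    (hp : p ≡ t.primeResidue r [MOD t.modulus]) : t.modulus ∣ 2 ^ t.residue * p + r := by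
  rw [← ZMod.natCast_eq_zero_iff]
  have he' : (2 : ZMod t.modulus) ^ t.period = 1 := by
    exact_mod_cast (ZMod.natCast_eq_natCast_iff _ _ _).mpr he
  have hp' := (ZMod.natCast_eq_natCast_iff _ _ _).mpr hp
  push_cast [primeResidue, Nat.cast_sub hm, ZMod.natCast_self] at hp' ⊢
  rw [hp', ← mul_assoc, ← pow_add, Nat.add_sub_cancel' hc]
  linear_combination (-(r : ZMod t.modulus)) * he'

theorem Nat.frequently_atTop_prime_and_forall_modEq (l : List (ℕ × ℕ))
    (hl : l.Pairwise (Nat.Coprime on Prod.fst)) (h0 : ∀ x ∈ l, x.1 ≠ 0)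
    (hu : ∀ x ∈ l, Nat.Coprime x.2 x.1) :
    ∃ᶠ p in atTop, p.Prime ∧ ∀ x ∈ l, p ≡ x.2 [MOD x.1] := by
  obtain ⟨K, hK⟩ := Nat.chineseRemainderOfList Prod.snd Prod.fst l hl
  have hN : (l.map Prod.fst).prod ≠ 0 := by
    rw [Ne, List.prod_eq_zero_iff, List.mem_map]
    rintro ⟨x, hx, hx0⟩
    exact h0 x hx hx0
  have hKN : K.Coprime (l.map Prod.fst).prod :=
    Nat.coprime_list_prod_right_iff.mpr <| List.forall_mem_map.mpr fun x hx =>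
      (hK x hx).gcd_eq.trans (hu x hx)
  refine (Nat.frequently_atTop_prime_and_modEq hN hKN).mono fun p ⟨hp, hpK⟩ => ⟨hp, fun x hx => ?_⟩
  exact (hpK.of_dvd (List.dvd_prod (List.mem_map_of_mem hx))).trans (hK x hx)

def fermatCovering : List CoveringClass :=
  [⟨3, 2, 1⟩, ⟨5, 4, 2⟩, ⟨17, 8, 4⟩, ⟨257, 16, 8⟩, ⟨65537, 32, 16⟩, ⟨641, 64, 32⟩,
    ⟨6700417, 64, 0⟩]

theorem isCovering_fermatCovering : IsCovering fermatCovering := by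
  refine ⟨fun c => ?_, by decide⟩
  simp only [fermatCovering, List.mem_cons, List.not_mem_nil, exists_eq_or_imp, exists_eq_left,
    or_false]
  omega

theorem mem_fermatCovering {t : CoveringClass} (ht : t ∈ fermatCovering) :
    t.modulus.Prime ∧ 2 < t.modulus ∧ t.modulus ≤ 6700417 ∧ t.residue ≤ t.period := by
  simp only [fermatCovering, List.mem_cons, List.not_mem_nil, or_false] at ht
  rcases ht with rfl | rfl | rfl | rfl | rfl | rfl | rfl <;> norm_num

theorem frequently_prime_fermatCovering {r : ℕ} (hrodd : Odd r)
    (hr : ∀ t ∈ fermatCovering, ¬ t.modulus ∣ r) :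
    ∃ᶠ p in atTop, p.Prime ∧ p ≡ r + 6 [MOD 8] ∧
      ∀ t ∈ fermatCovering, t.modulus ∣ 2 ^ t.residue * p + r := by
  have hcop : ∀ t ∈ fermatCovering, (t.primeResidue r).Coprime t.modulus := fun t ht => by
    obtain ⟨hprime, h2, -, -⟩ := mem_fermatCovering ht
    exact .mul_left (.pow_left _ ((Nat.coprime_primes Nat.prime_two hprime).mpr h2.ne))
      (.mul_left ((Nat.coprime_self_sub_left hprime.one_lt.le).mpr (Nat.coprime_one_left _))
        (hprime.coprime_iff_not_dvd.mpr (hr t ht)).symm)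
  have h := Nat.frequently_atTop_prime_and_forall_modEq
    ((8, r + 6) :: fermatCovering.map fun t => (t.modulus, t.primeResidue r)) ?_ ?_ ?_
  · refine h.mono fun p ⟨hp, hmod⟩ => ⟨hp, hmod _ List.mem_cons_self, fun t ht => ?_⟩
    obtain ⟨hprime, -, -, hle⟩ := mem_fermatCovering ht
    exact t.dvd_of_modEq_primeResidue hprime.one_lt.le (isCovering_fermatCovering.2 t ht) hle
      (hmod _ (List.mem_cons_of_mem _ (List.mem_map_of_mem ht)))
  · simp only [List.pairwise_cons, List.pairwise_map, List.forall_mem_map, Function.onFun]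
    decide
  · simp only [List.forall_mem_cons, List.forall_mem_map]
    exact ⟨by norm_num, fun t ht => (mem_fermatCovering ht).1.ne_zero⟩
  · simp only [List.forall_mem_cons, List.forall_mem_map]
    exact ⟨.pow_right 3 (Nat.coprime_two_right.mpr (hrodd.add_even (by decide))), hcop⟩

theorem infinite_primes_two_pow_nontotient_general (r : ℕ) (hrodd : Odd r)
    (h3 : ¬ 3 ∣ r) (h5 : ¬ 5 ∣ r) (h17 : ¬ 17 ∣ r) (h257 : ¬ 257 ∣ r)
    (h641 : ¬ 641 ∣ r) (h65537 : ¬ 65537 ∣ r) (h6700417 : ¬ 6700417 ∣ r) :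
    {p : ℕ | p.Prime ∧ ∀ α : ℕ, ¬ ∃ x : ℕ, 0 < x ∧ schemmel r x = 2 ^ α * p}.Infinite := by
  have hr : ∀ t ∈ fermatCovering, ¬ t.modulus ∣ r := by
    simp only [fermatCovering, List.forall_mem_cons, List.not_mem_nil, IsEmpty.forall_iff,
      implies_true, and_true]
    exact ⟨h3, h5, h17, h257, h65537, h641, h6700417⟩
  refine Nat.frequently_atTop_iff_infinite.mp
    (((frequently_prime_fermatCovering hrodd hr).and_eventually
      (eventually_gt_atTop 6700417)).mono ?_)
  rintro p ⟨⟨hp, h8, hdvd⟩, hbig⟩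
  refine ⟨hp, ?_⟩
  rintro α ⟨x, -, hx⟩
  rcases schemmel_eq_two_pow_mul_prime hp hx with ⟨c, hc⟩ | ⟨b, rfl⟩
  · have hm (t) (ht : t ∈ fermatCovering) : 1 < t.modulus ∧ t.modulus < p :=
      ⟨(mem_fermatCovering ht).1.one_lt, (mem_fermatCovering ht).2.2.1.trans_lt hbig⟩
    exact isCovering_fermatCovering.not_prime hm hdvd c hc
  · exact two_pow_add_not_modEq b r h8

theorem infinite_primes_two_pow_nontotient (r : ℕ) (hr : 0 < r) (hrodd : Odd r)
    (h3 : ¬ 3 ∣ r) (h5 : ¬ 5 ∣ r) (h17 : ¬ 17 ∣ r) (h257 : ¬ 257 ∣ r)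
    (h641 : ¬ 641 ∣ r) (h65537 : ¬ 65537 ∣ r) (h6700417 : ¬ 6700417 ∣ r) :
    {p : ℕ | p.Prime ∧ ∀ α : ℕ, ¬ ∃ x : ℕ, 0 < x ∧ schemmel r x = 2 ^ α * p}.Infinite :=
  infinite_primes_two_pow_nontotient_general r hrodd h3 h5 h17 h257 h641 h65537 h6700417
end

section
/- Suppose r + 1 is prime, t is a positive integer, and p = (r+1)^t + r is prime. Then for every nonnegative integer α with t ≤ α, S_r((r+1)^{α−t+1} · p²) = (r+1)^α · p. -/
/-! `S_r` is multiplicative, so it splits over the coprime factors `(r+1)^(α-t+1)` and `p^2`.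
Since `p - r = (r+1)^t`, the factor `p^2` contributes `p * (r+1)^t`, while `(r+1)^(α-t+1)`
contributes `(r+1)^(α-t) * 1`; together these give `(r+1)^α * p`. -/

theorem schemmel_mul_of_coprime (r : ℕ) {m n : ℕ} (h : m.Coprime n) :
    schemmel r (m * n) = schemmel r m * schemmel r n := by
  unfold schemmel
  rw [Nat.factorization_mul_of_coprime h,
    Finsupp.prod_add_index_of_disjoint h.disjoint_primeFactors]

theorem schemmel_prime_pow_of_lt {r p a : ℕ} (hp : p.Prime) (hrp : r < p) (ha : a ≠ 0) :
    schemmel r (p ^ a) = p ^ (a - 1) * (p - r) := by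
  rw [schemmel, hp.factorization_pow, Finsupp.prod, Finsupp.support_single _ ha,
    Finset.prod_singleton, Finsupp.single_eq_same, if_neg hrp.not_ge]

theorem schemmel_pow_mul_sq (r t α p : ℕ) (hr : (r + 1).Prime) (ht : 0 < t)
    (hp : p = (r + 1) ^ t + r) (hpp : p.Prime) (htα : t ≤ α) :
    schemmel r ((r + 1) ^ (α - t + 1) * p ^ 2) = (r + 1) ^ α * p := by
  have hrp : r + 1 < p := by
    have := hr.two_le
    have : r + 1 ≤ (r + 1) ^ t := Nat.le_self_pow ht.ne' _
    omega
  have hcop : ((r + 1) ^ (α - t + 1)).Coprime (p ^ 2) :=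
    Nat.coprime_pow_primes _ _ hr hpp hrp.ne
  rw [schemmel_mul_of_coprime r hcop, schemmel_prime_pow_of_lt hr (by omega) (by omega),
    schemmel_prime_pow_of_lt hpp (by omega) two_ne_zero,
    show p - r = (r + 1) ^ t by omega, show r + 1 - r = 1 by omega]
  calc (r + 1) ^ (α - t + 1 - 1) * 1 * (p ^ (2 - 1) * (r + 1) ^ t)
      = (r + 1) ^ (α - t + t) * p := by rw [Nat.add_sub_cancel, pow_add]; ring
    _ = (r + 1) ^ α * p := by rw [Nat.sub_add_cancel htα]
end

section
/- Let m > 1, let q₀, q₁, …, q_N be distinct odd primes with ord_{q₀}(m) = 2^N and ord_{q_n}(m) = 2^n for 1 ≤ n ≤ N, and let x be a positive integer satisfying x + m ≡ 1 (mod q₀) and m^{2^{n−1}} x + m ≡ 1 (mod q_n) for 1 ≤ n ≤ N. Then for every nonnegative integer t, exactly one of the primes q₀, …, q_N divides m^t x + m − 1. -/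
/-! Modulo `q`, the hypotheses say `m ^ eᵢ * x = 1 - m` with `e₀ = 0` and `eₙ = 2 ^ (n - 1)`, so
`q` divides `m ^ t * x + m - 1` exactly when `t ≡ eᵢ` modulo the order of `m`. These congruences
read `2 ^ N ∣ t` for `q₀` and `v₂(t) = n - 1` for `qₙ`, and exactly one of them holds. -/

theorem Nat.modEq_two_pow_succ_iff_emultiplicity_eq (n t : ℕ) :
    t ≡ 2 ^ n [MOD 2 ^ (n + 1)] ↔ emultiplicity 2 t = n := by
  rw [emultiplicity_eq_coe]
  constructor
  · intro h
    refine ⟨?_, fun hdvd => ?_⟩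
    · exact Nat.modEq_zero_iff_dvd.1
        ((h.of_dvd (pow_dvd_pow 2 n.le_succ)).trans (Nat.modEq_zero_iff_dvd.2 dvd_rfl))
    · have : 2 ^ (n + 1) ∣ 2 ^ n :=
        Nat.modEq_zero_iff_dvd.1 (h.symm.trans (Nat.modEq_zero_iff_dvd.2 hdvd))
      exact absurd (Nat.pow_dvd_pow_iff_le_right one_lt_two |>.1 this) (by omega)
  · rintro ⟨⟨u, rfl⟩, hu⟩
    have hodd : u ≡ 1 [MOD 2] := by
      rw [pow_succ, Nat.mul_dvd_mul_iff_left (by positivity)] at hu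
      exact Nat.two_dvd_ne_zero.1 hu
    simpa [pow_succ] using hodd.mul_left' (2 ^ n)

theorem ENat.existsUnique_fin_cases_le_or_eq (N : ℕ) (v : ℕ∞) :
    ∃! i : Fin (N + 1), Fin.cases ((N : ℕ∞) ≤ v) (fun n : Fin N => v = n) i := by
  by_cases hNv : (N : ℕ∞) ≤ v
  · refine ⟨0, hNv, fun j hj => ?_⟩
    cases j using Fin.cases with
    | zero => rfl
    | succ n =>
      simp only [Fin.cases_succ] at hj
      exact absurd (hj ▸ hNv) (by simp)
  · obtain ⟨k, rfl⟩ := ENat.ne_top_iff_exists.1 (ne_top_of_lt (not_le.1 hNv))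
    have hk : k < N := by exact_mod_cast not_le.1 hNv
    refine ⟨Fin.succ ⟨k, hk⟩, by simp, fun j hj => ?_⟩
    cases j using Fin.cases with
    | zero => exact absurd hj hNv
    | succ n =>
      simp only [Fin.cases_succ, Nat.cast_inj] at hj
      exact congrArg Fin.succ (Fin.ext hj.symm)

theorem pow_mul_eq_one_sub_iff_modEq {R : Type*} [CommRing R] [IsDomain R] {a y : R} {e t : ℕ}
    (ha : IsOfFinOrder a) (he : a ^ e * y = 1 - a) :
    a ^ t * y = 1 - a ↔ t ≡ e [MOD orderOf a] := by
  by_cases ha1 : a = 1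
  · subst ha1
    simp_all [Nat.modEq_one]
  · have hy : y ≠ 0 := by
      rintro rfl
      exact ha1 (sub_eq_zero.1 (he.symm.trans (mul_zero _))).symm
    rw [← he, mul_left_inj' hy, ha.pow_eq_pow_iff_modEq]

theorem Nat.pow_mul_add_modEq_one_iff_zmod {q m x e : ℕ} :
    m ^ e * x + m ≡ 1 [MOD q] ↔ (m : ZMod q) ^ e * x = 1 - m := by
  rw [← ZMod.natCast_eq_natCast_iff]
  push_cast
  rw [eq_sub_iff_add_eq]

theorem dvd_pow_mul_add_sub_one_iff_modEq {q m x e : ℕ} [Fact q.Prime] (hm : 0 < m)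
    (hfin : IsOfFinOrder (m : ZMod q)) (he : m ^ e * x + m ≡ 1 [MOD q]) (t : ℕ) :
    q ∣ m ^ t * x + m - 1 ↔ t ≡ e [MOD orderOf (m : ZMod q)] := by
  rw [← Nat.modEq_iff_dvd' (by omega), Nat.ModEq.comm, Nat.pow_mul_add_modEq_one_iff_zmod]
  exact pow_mul_eq_one_sub_iff_modEq hfin (Nat.pow_mul_add_modEq_one_iff_zmod.1 he)

theorem unique_prime_divisor_of_progression_general (m N : ℕ) (hm : 1 < m)
    (q : Fin (N + 1) → ℕ) (hq : ∀ i, (q i).Prime)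
    (hord0 : orderOf ((m : ZMod (q 0))) = 2 ^ N)
    (hordn : ∀ n : Fin (N + 1), 1 ≤ (n : ℕ) →
      orderOf ((m : ZMod (q n))) = 2 ^ (n : ℕ))
    (x : ℕ)
    (hx0 : x + m ≡ 1 [MOD q 0])
    (hxn : ∀ n : Fin (N + 1), 1 ≤ (n : ℕ) →
      m ^ (2 ^ ((n : ℕ) - 1)) * x + m ≡ 1 [MOD q n]) :
    ∀ t : ℕ, ∃! i : Fin (N + 1), q i ∣ m ^ t * x + m - 1 := by
  intro t
  have key : ∀ i, q i ∣ m ^ t * x + m - 1 ↔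
      Fin.cases ((N : ℕ∞) ≤ emultiplicity 2 t) (fun n : Fin N => emultiplicity 2 t = n) i := by
    intro i
    have := Fact.mk (hq i)
    cases i using Fin.cases with
    | zero =>
      rw [dvd_pow_mul_add_sub_one_iff_modEq (e := 0) (by omega)
        (orderOf_pos_iff.1 (hord0 ▸ by positivity)) (by simpa using hx0), hord0]
      simp [Nat.modEq_zero_iff_dvd, pow_dvd_iff_le_emultiplicity]
    | succ n =>
      have hord := hordn n.succ (by simp)
      rw [dvd_pow_mul_add_sub_one_iff_modEq (by omega) (orderOf_pos_iff.1 (hord ▸ by positivity))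
        (hxn n.succ (by simp)), hord]
      simpa using Nat.modEq_two_pow_succ_iff_emultiplicity_eq n t
  simpa only [key] using ENat.existsUnique_fin_cases_le_or_eq N (emultiplicity 2 t)

theorem unique_prime_divisor_of_progression (m N : ℕ) (hm : 1 < m)
    (q : Fin (N + 1) → ℕ) (hq : ∀ i, (q i).Prime) (hqodd : ∀ i, Odd (q i))
    (hinj : Function.Injective q)
    (hord0 : orderOf ((m : ZMod (q 0))) = 2 ^ N)
    (hordn : ∀ n : Fin (N + 1), 1 ≤ (n : ℕ) →
      orderOf ((m : ZMod (q n))) = 2 ^ (n : ℕ))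
    (x : ℕ) (hx : 0 < x)
    (hx0 : x + m ≡ 1 [MOD q 0])
    (hxn : ∀ n : Fin (N + 1), 1 ≤ (n : ℕ) →
      m ^ (2 ^ ((n : ℕ) - 1)) * x + m ≡ 1 [MOD q n]) :
    ∀ t : ℕ, ∃! i : Fin (N + 1), q i ∣ m ^ t * x + m - 1 :=
  unique_prime_divisor_of_progression_general m N hm q hq hord0 hordn x hx0 hxn
end

section
/- Let r ≥ 3 be odd and let p be a prime such that p ≠ 2^t + r for all nonnegative integers t, and 2^t · p + r is not prime for all nonnegative integers t. Then for every nonnegative integer α, 2^α · p is a Schemmel nontotient number of order r. -/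
section Schemmel

variable {r n q : ℕ}

theorem schemmel_eq_prod_primeFactors_s17 (r n : ℕ) :
    schemmel r n =
      ∏ q ∈ n.primeFactors, if q ≤ r then 0 else q ^ (n.factorization q - 1) * (q - r) := by
  rw [schemmel, Finsupp.prod, Nat.support_factorization]

theorem lt_of_mem_primeFactors_of_schemmel_ne_zero (h : schemmel r n ≠ 0)
    (hq : q ∈ n.primeFactors) : r < q := by
  by_contra! hqr
  exact h <| (schemmel_eq_prod_primeFactors_s17 r n).trans <| Finset.prod_eq_zero hq (if_pos hqr)

theorem schemmel_factor_dvd (hq : q ∈ n.primeFactors) (hqr : r < q) :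
    q ^ (n.factorization q - 1) * (q - r) ∣ schemmel r n := by
  have h := Finset.dvd_prod_of_mem
    (fun q => if q ≤ r then 0 else q ^ (n.factorization q - 1) * (q - r)) hq
  rwa [if_neg hqr.not_ge, ← schemmel_eq_prod_primeFactors_s17] at h

theorem exists_primeFactor_of_prime_dvd_schemmel {p : ℕ} (hp : p.Prime) (h : schemmel r n ≠ 0)
    (hpdvd : p ∣ schemmel r n) :
    ∃ q ∈ n.primeFactors, r < q ∧ (p = q ∨ p ∣ q - r) := by
  rw [schemmel_eq_prod_primeFactors_s17] at hpdvd
  obtain ⟨q, hq, hpq⟩ := hp.prime.exists_mem_finset_dvd hpdvd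
  have hqr := lt_of_mem_primeFactors_of_schemmel_ne_zero h hq
  rw [if_neg hqr.not_ge] at hpq
  refine ⟨q, hq, hqr, (hp.dvd_mul.mp hpq).imp_left fun hpow => ?_⟩
  exact (Nat.prime_dvd_prime_iff_eq hp (Nat.prime_of_mem_primeFactors hq)).mp
    (hp.dvd_of_dvd_pow hpow)

end Schemmel

theorem exists_eq_two_pow_add_of_sub_dvd {p r α : ℕ} (hp : p.Prime) (hr : 0 < r) (hrp : r < p)
    (hdvd : p - r ∣ 2 ^ α * p) : ∃ t, p = 2 ^ t + r := by
  have hcop : (p - r).Coprime p :=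
    Nat.coprime_comm.mp <| (hp.coprime_iff_not_dvd).mpr fun hd => by
      have := Nat.le_of_dvd (by omega) hd
      omega
  obtain ⟨t, -, ht⟩ := (Nat.dvd_prime_pow Nat.prime_two).mp (hcop.dvd_of_dvd_mul_right hdvd)
  exact ⟨t, by omega⟩

theorem exists_eq_two_pow_mul_add_of_dvd_sub {p q r α : ℕ} (hp : p.Prime) (hrq : r < q)
    (hpdvd : p ∣ q - r) (hdvd : q - r ∣ 2 ^ α * p) : ∃ t, q = 2 ^ t * p + r := by
  obtain ⟨d, hd⟩ := hpdvd
  rw [hd, mul_comm (2 ^ α)] at hdvd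
  obtain ⟨t, -, ht⟩ :=
    (Nat.dvd_prime_pow Nat.prime_two).mp ((mul_dvd_mul_iff_left hp.ne_zero).mp hdvd)
  exact ⟨t, by rw [← ht, mul_comm]; omega⟩

theorem two_pow_mul_nontotient_general (r p : ℕ) (hr3 : 3 ≤ r)
    (hp : p.Prime) (h1 : ∀ t : ℕ, p ≠ 2 ^ t + r)
    (h2 : ∀ t : ℕ, ¬ (2 ^ t * p + r).Prime) :
    ∀ α : ℕ, ¬ ∃ x : ℕ, 0 < x ∧ schemmel r x = 2 ^ α * p := by
  rintro α ⟨x, -, hx⟩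
  have hne : schemmel r x ≠ 0 := hx ▸ mul_ne_zero (pow_ne_zero α two_ne_zero) hp.ne_zero
  obtain ⟨q, hq, hqr, hpq⟩ :=
    exists_primeFactor_of_prime_dvd_schemmel hp hne (hx ▸ dvd_mul_left p _)
  have hsub : q - r ∣ 2 ^ α * p := hx ▸ (dvd_mul_left _ _).trans (schemmel_factor_dvd hq hqr)
  rcases hpq with hpq | hpq
  · subst hpq
    obtain ⟨t, ht⟩ := exists_eq_two_pow_add_of_sub_dvd hp (by omega) hqr hsub
    exact h1 t ht
  · obtain ⟨t, ht⟩ := exists_eq_two_pow_mul_add_of_dvd_sub hp hqr hpq hsub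
    exact h2 t (ht ▸ Nat.prime_of_mem_primeFactors hq)

theorem two_pow_mul_nontotient (r p : ℕ) (hrodd : Odd r) (hr3 : 3 ≤ r)
    (hp : p.Prime) (h1 : ∀ t : ℕ, p ≠ 2 ^ t + r)
    (h2 : ∀ t : ℕ, ¬ (2 ^ t * p + r).Prime) :
    ∀ α : ℕ, ¬ ∃ x : ℕ, 0 < x ∧ schemmel r x = 2 ^ α * p :=
  two_pow_mul_nontotient_general r p hr3 hp h1 h2
end
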